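/- arXiv:2312.17153 — 2 statements merged into one kernel-verified Lean document; each statement's English description precedes it below -/
import Mathlib

section
/- For m ≥ 1 and n ≥ 1, the alternative m-th order Eulerian fraction F̂_{m;n}(t) = t·S_{m;n}(t)/(1-t)^{mn+1} satisfies t · d/dt F̂_{m;n}(t) = (1-t)^{m-1} · F̂_{m;n+1}(t) for t ≠ 1. -/
/-!
Differentiating `t f(t) / (1 - t)^(N + 1)` gives
`((1 - t) (f + t f') + (N + 1) t f) / (1 - t)^(N + 2)`. For `f = S_{m;n}` and `N = mn` the
recurrence for `T^(m)_{n,k}`, read on coefficients, says that this numerator is `S_{m;n+1}`,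
and `(1 - t)^(mn + 2) (1 - t)^(m - 1) = (1 - t)^(m(n + 1) + 1)`.
-/

/-- The `m`th-order Eulerian numbers `T^(m)_{n,k}`, with integer descent index `k`
(so `T^(m)_{n,k} = 0` for `k < 0` or `k ≥ n`). -/
def eulerianT (m : ℕ) : ℕ → ℤ → ℤ
  | 0, _ => 0
  | 1, k => if k = 0 then 1 else 0
  | n + 2, k =>
      if k < 0 ∨ (n : ℤ) + 2 ≤ k then 0
      else (k + 1) * eulerianT m (n + 1) k +
        ((m : ℤ) * ((n : ℤ) + 2) - k - (m : ℤ) + 1) * eulerianT m (n + 1) (k - 1)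

/-- The `m`th-order Eulerian polynomial `S_{m;n}(t)`. -/
noncomputable def S (m n : ℕ) (t : ℝ) : ℝ :=
  ∑ k ∈ Finset.range n, (eulerianT m n (k : ℤ) : ℝ) * t ^ k

/-- The alternative form of the `m`th-order Eulerian fraction. -/
noncomputable def Fhat (m n : ℕ) (t : ℝ) : ℝ := t * S m n t / (1 - t) ^ (m * n + 1)

lemma eulerianT_eq_zero (m n : ℕ) {k : ℤ} (hk : k < 0 ∨ n ≤ k) : eulerianT m n k = 0 := by
  match n with
  | 0 => rfl
  | 1 => simp only [eulerianT, ite_eq_right_iff]; omega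
  | n + 2 => simp only [eulerianT]; rw [if_pos (by push_cast at hk; omega)]

-- Outside `0 ≤ k ≤ n` both sides vanish, so no range condition on `k` is needed.
lemma eulerianT_succ (m : ℕ) {n : ℕ} (hn : 1 ≤ n) (k : ℤ) :
    eulerianT m (n + 1) k =
      (k + 1) * eulerianT m n k + (m * n + 1 - k) * eulerianT m n (k - 1) := by
  obtain ⟨n, rfl⟩ : ∃ n', n = n' + 1 := ⟨n - 1, by omega⟩
  show eulerianT m (n + 2) k = _
  simp only [eulerianT]
  split_ifs
  · rw [eulerianT_eq_zero m (n + 1) (by push_cast; omega),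
      eulerianT_eq_zero m (n + 1) (k := k - 1) (by push_cast; omega)]
    ring
  · push_cast
    ring

lemma hasDerivAt_S (m n : ℕ) (t : ℝ) :
    HasDerivAt (S m n) (∑ k ∈ Finset.range n, (eulerianT m n k : ℝ) * (k * t ^ (k - 1))) t :=
  HasDerivAt.fun_sum fun k _ => (hasDerivAt_pow k t).const_mul _

lemma mul_deriv_S (m n : ℕ) (t : ℝ) :
    t * deriv (S m n) t = ∑ k ∈ Finset.range n, (eulerianT m n k : ℝ) * k * t ^ k := by
  rw [(hasDerivAt_S m n t).deriv, Finset.mul_sum]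
  refine Finset.sum_congr rfl fun k _ => ?_
  cases k with
  | zero => simp
  | succ k => rw [Nat.add_sub_cancel, pow_succ]; ring

lemma S_succ (m : ℕ) {n : ℕ} (hn : 1 ≤ n) (t : ℝ) :
    S m (n + 1) t = (1 - t) * (S m n t + t * deriv (S m n) t) + (m * n + 1) * t * S m n t := by
  have hsplit : S m (n + 1) t =
      ∑ k ∈ Finset.range (n + 1), ((k + 1) * eulerianT m n k : ℝ) * t ^ k +
      ∑ k ∈ Finset.range (n + 1), ((m * n + 1 - k) * eulerianT m n (k - 1) : ℝ) * t ^ k := by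
    rw [S, ← Finset.sum_add_distrib]
    refine Finset.sum_congr rfl fun k _ => ?_
    rw [eulerianT_succ m hn]
    push_cast
    ring
  have hfirst : ∑ k ∈ Finset.range (n + 1), ((k + 1) * eulerianT m n k : ℝ) * t ^ k =
      ∑ k ∈ Finset.range n, ((k + 1) * eulerianT m n k : ℝ) * t ^ k := by
    rw [Finset.sum_range_succ, eulerianT_eq_zero m n (Or.inr le_rfl)]
    simp
  have hsecond : ∑ k ∈ Finset.range (n + 1), ((m * n + 1 - k) * eulerianT m n (k - 1) : ℝ) * t ^ k =
      ∑ k ∈ Finset.range n, ((m * n - k) * eulerianT m n k : ℝ) * t ^ (k + 1) := by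
    rw [Finset.sum_range_succ', eulerianT_eq_zero m n (k := (0 : ℕ) - 1) (Or.inl (by norm_num))]
    simp only [Int.cast_zero, mul_zero, zero_mul, add_zero]
    refine Finset.sum_congr rfl fun k _ => ?_
    push_cast
    ring_nf
  rw [hsplit, hfirst, hsecond, mul_deriv_S, S]
  simp only [mul_add, Finset.mul_sum, ← Finset.sum_add_distrib]
  refine Finset.sum_congr rfl fun k _ => ?_
  ring

lemma hasDerivAt_mul_div_one_sub_pow {f : ℝ → ℝ} {f' t : ℝ} (N : ℕ) (hf : HasDerivAt f f' t)
    (ht : t ≠ 1) :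
    HasDerivAt (fun t => t * f t / (1 - t) ^ (N + 1))
      (((1 - t) * (f t + t * f') + (N + 1) * t * f t) / (1 - t) ^ (N + 2)) t := by
  have h1t : 1 - t ≠ 0 := sub_ne_zero_of_ne ht.symm
  refine (((hasDerivAt_id' t).fun_mul hf).fun_div
    (((hasDerivAt_id' t).const_sub 1).fun_pow (N + 1)) (pow_ne_zero _ h1t)).congr_deriv ?_
  rw [Nat.add_sub_cancel]
  field_simp
  push_cast
  ring

theorem deriv_Fhat (m n : ℕ) (hm : 1 ≤ m) (hn : 1 ≤ n) (t : ℝ) (ht : t ≠ 1) :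
    t * deriv (Fhat m n) t = (1 - t) ^ (m - 1) * Fhat m (n + 1) t := by
  obtain ⟨m, rfl⟩ : ∃ m', m = m' + 1 := ⟨m - 1, by omega⟩
  have hF : HasDerivAt (Fhat (m + 1) n) _ t := hasDerivAt_mul_div_one_sub_pow ((m + 1) * n)
    (hasDerivAt_S (m + 1) n t).differentiableAt.hasDerivAt ht
  rw [hF.deriv, Fhat, S_succ (m + 1) hn]
  have h1t : 1 - t ≠ 0 := sub_ne_zero_of_ne ht.symm
  field_simp
  push_cast
  ring
end

section
/- Second-order Worpitzky identity: for n ≥ 1 and all natural numbers x ≥ n, Σ_{k=0}^{n-1} T^(2)_{n,k} · C(x+k, 2n) = c(x, x-n), where c(x, x-n) is the unsigned Stirling number of the first kind. -/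
/-- Unsigned Stirling numbers of the first kind `c(n,j)` (Stirling cycle numbers),
with integer index `j` (so `c(n,j) = 0` for `j < 0`). -/
def stirlingFirst : ℕ → ℤ → ℕ
  | 0, j => if j = 0 then 1 else 0
  | n + 1, j => n * stirlingFirst n j + stirlingFirst n (j - 1)

open Finset

lemma eulerianT_of_neg (m n : ℕ) {k : ℤ} (hk : k < 0) : eulerianT m n k = 0 := by
  match n with
  | 0 => rfl
  | 1 => rw [eulerianT, if_neg (by omega)]
  | n + 2 => rw [eulerianT, if_pos (Or.inl hk)]

lemma eulerianT_of_le (m n : ℕ) {k : ℤ} (hk : (n : ℤ) ≤ k) : eulerianT m n k = 0 := by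
  match n with
  | 0 => rfl
  | 1 => rw [eulerianT, if_neg (by omega)]
  | n + 2 => rw [eulerianT, if_pos (Or.inr (by push_cast at hk; omega))]

/-- The recurrence holds for every `k`, not only in the range where the definition applies it. -/
lemma eulerianT_add_two (m n : ℕ) (k : ℤ) :
    eulerianT m (n + 2) k = (k + 1) * eulerianT m (n + 1) k +
      ((m : ℤ) * ((n : ℤ) + 2) - k - (m : ℤ) + 1) * eulerianT m (n + 1) (k - 1) := by
  rw [eulerianT]
  split_ifs with hk
  · rcases hk with hk | hk
    · rw [eulerianT_of_neg m (n + 1) hk, eulerianT_of_neg m (n + 1) (by omega : k - 1 < 0)]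
      ring
    · rw [eulerianT_of_le m (n + 1) (by push_cast; omega),
        eulerianT_of_le m (n + 1) (by push_cast; omega : ((n + 1 : ℕ) : ℤ) ≤ k - 1)]
      ring
  · rfl

lemma stirlingFirst_of_neg (x : ℕ) {j : ℤ} (hj : j < 0) : stirlingFirst x j = 0 := by
  induction x generalizing j with
  | zero => rw [stirlingFirst, if_neg (by omega)]
  | succ x ih => rw [stirlingFirst, ih hj, ih (by omega : j - 1 < 0), mul_zero]

lemma stirlingFirst_of_lt {x : ℕ} {j : ℤ} (hj : (x : ℤ) < j) : stirlingFirst x j = 0 := by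
  induction x generalizing j with
  | zero => rw [stirlingFirst, if_neg (by omega)]
  | succ x ih =>
    push_cast at hj
    rw [stirlingFirst, ih (by omega), ih (by omega : (x : ℤ) < j - 1), mul_zero]

lemma stirlingFirst_self (x : ℕ) : stirlingFirst x x = 1 := by
  induction x with
  | zero => rfl
  | succ x ih =>
    rw [stirlingFirst, stirlingFirst_of_lt (by push_cast; omega), Nat.cast_succ,
      add_sub_cancel_right, ih, mul_zero, zero_add]

lemma stirlingFirst_self_sub_one (x : ℕ) : stirlingFirst x (x - 1) = x.choose 2 := by
  induction x with
  | zero => rfl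
  | succ x ih =>
    rw [stirlingFirst, Nat.cast_succ, add_sub_cancel_right, stirlingFirst_self, ih,
      Nat.choose_succ_succ x 1, Nat.choose_one_right, mul_one, add_comm]

lemma stirlingFirst_succ_self_sub_succ (x n : ℕ) :
    stirlingFirst (x + 1) ((x + 1 : ℕ) - (n + 1 : ℕ)) =
      x * stirlingFirst x (x - n) + stirlingFirst x (x - (n + 1 : ℕ)) := by
  rw [stirlingFirst, show ((x + 1 : ℕ) : ℤ) - (n + 1 : ℕ) = x - n by push_cast; ring,
    show (x : ℤ) - n - 1 = x - (n + 1 : ℕ) by push_cast; ring]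

lemma succ_mul_choose_succ (a j : ℕ) :
    ((j : ℤ) + 1) * (a.choose (j + 1) : ℤ) = ((a : ℤ) - j) * (a.choose j : ℤ) := by
  rcases le_or_gt j a with hja | haj
  · have h := congrArg (Nat.cast : ℕ → ℤ) (Nat.choose_succ_right_eq a j)
    push_cast [hja] at h
    linear_combination h
  · rw [Nat.choose_eq_zero_of_lt haj, Nat.choose_eq_zero_of_lt (by omega)]
    simp

lemma sum_range_eulerianT_mul_of_le (m : ℕ) {n N : ℕ} (h : n ≤ N) (f : ℕ → ℤ) :
    ∑ k ∈ range N, eulerianT m n k * f k = ∑ k ∈ range n, eulerianT m n k * f k := by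
  refine (sum_subset (range_subset_range.2 h) fun k _ hk => ?_).symm
  rw [eulerianT_of_le m n (by simp at hk; omega), zero_mul]

def worpitzkySum (n x : ℕ) : ℤ :=
  ∑ k ∈ range n, eulerianT 2 n k * ((x + k).choose (2 * n) : ℤ)

lemma worpitzkySum_zero_right (n : ℕ) : worpitzkySum n 0 = 0 :=
  sum_eq_zero fun k hk => by
    rw [Nat.choose_eq_zero_of_lt (by simp at hk; omega), Nat.cast_zero, mul_zero]

lemma worpitzkySum_one_left (x : ℕ) : worpitzkySum 1 x = x.choose 2 := by
  simp [worpitzkySum, eulerianT]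

lemma sum_eulerianT_mul_choose_two_mul_add_three (n x : ℕ) :
    ∑ k ∈ range (n + 2), eulerianT 2 (n + 2) k * ((x + k).choose (2 * n + 3) : ℤ) =
      x * worpitzkySum (n + 1) x := by
  have hterm (k : ℕ) : ((k : ℤ) + 1) * (x + k).choose (2 * n + 3) +
      (2 * (n : ℤ) + 2 - k) * (x + k + 1).choose (2 * n + 3) =
      x * (x + k).choose (2 * (n + 1)) := by
    have h : ((2 * n + 2 : ℕ) + 1 : ℤ) * ((x + k).choose (2 * n + 3) : ℤ) =
        ((x + k : ℕ) - (2 * n + 2 : ℕ) : ℤ) * ((x + k).choose (2 * n + 2) : ℤ) :=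
      succ_mul_choose_succ (x + k) (2 * n + 2)
    rw [Nat.choose_succ_succ' (x + k) (2 * n + 2), show 2 * (n + 1) = 2 * n + 2 by ring]
    push_cast at h ⊢
    linear_combination h
  calc ∑ k ∈ range (n + 2), eulerianT 2 (n + 2) k * ((x + k).choose (2 * n + 3) : ℤ)
      = ∑ k ∈ range (n + 2), eulerianT 2 (n + 1) k * ((k + 1) * (x + k).choose (2 * n + 3)) +
          ∑ k ∈ range (n + 2), eulerianT 2 (n + 1) ((k : ℤ) - 1) *
            ((2 * n + 3 - k) * (x + k).choose (2 * n + 3)) := by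
        rw [← sum_add_distrib]
        refine sum_congr rfl fun k _ => ?_
        rw [eulerianT_add_two]
        push_cast
        ring
    _ = ∑ k ∈ range (n + 1), eulerianT 2 (n + 1) k * ((k + 1) * (x + k).choose (2 * n + 3)) +
          ∑ k ∈ range (n + 1), eulerianT 2 (n + 1) k *
            ((2 * n + 2 - k) * (x + k + 1).choose (2 * n + 3)) := by
        rw [sum_range_eulerianT_mul_of_le 2 (Nat.le_succ _), sum_range_succ' _ (n + 1),
          Nat.cast_zero, zero_sub, eulerianT_of_neg 2 (n + 1) (by norm_num), zero_mul, add_zero]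
        congr 1
        refine sum_congr rfl fun k _ => ?_
        push_cast
        ring_nf
    _ = x * worpitzkySum (n + 1) x := by
        rw [← sum_add_distrib, worpitzkySum, mul_sum]
        refine sum_congr rfl fun k _ => ?_
        rw [← mul_add, hterm, mul_left_comm]

lemma worpitzkySum_add_two_succ (n x : ℕ) :
    worpitzkySum (n + 2) (x + 1) = worpitzkySum (n + 2) x + x * worpitzkySum (n + 1) x := by
  rw [← sum_eulerianT_mul_choose_two_mul_add_three, worpitzkySum, worpitzkySum, ← sum_add_distrib]
  refine sum_congr rfl fun k _ => ?_
  rw [add_right_comm, show 2 * (n + 2) = 2 * n + 3 + 1 by ring, Nat.choose_succ_succ']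
  push_cast
  ring

theorem worpitzky_second_order_general (n x : ℕ) (hn : 1 ≤ n) :
    ∑ k ∈ Finset.range n, eulerianT 2 n (k : ℤ) * ((x + k).choose (2 * n) : ℤ) =
      (stirlingFirst x ((x : ℤ) - n) : ℤ) := by
  change worpitzkySum n x = _
  induction n, hn using Nat.le_induction generalizing x with
  | base => rw [worpitzkySum_one_left, Nat.cast_one, stirlingFirst_self_sub_one]
  | succ n hn ih =>
    obtain ⟨n, rfl⟩ : ∃ m, n = m + 1 := ⟨n - 1, by omega⟩
    induction x with
    | zero => rw [worpitzkySum_zero_right, stirlingFirst_of_neg 0 (by omega), Nat.cast_zero]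
    | succ x ihx =>
      rw [worpitzkySum_add_two_succ, ihx, ih x, stirlingFirst_succ_self_sub_succ]
      push_cast
      ring

theorem worpitzky_second_order (n x : ℕ) (hn : 1 ≤ n) (hx : n ≤ x) :
    ∑ k ∈ Finset.range n, eulerianT 2 n (k : ℤ) * ((x + k).choose (2 * n) : ℤ) =
      (stirlingFirst x ((x : ℤ) - n) : ℤ) :=
  worpitzky_second_order_general n x hn
end
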